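/- arXiv:2408.04507 — 6 statements merged into one kernel-verified Lean document; each statement's English description precedes it below -/
import Mathlib

section
/- Let H and V be Hilbert spaces with H ⊆ V densely. Let D : H → H* be bounded with Ker D* = Ker D, satisfying the Gårding inequality Re⟨Dv,v⟩ ≥ C₁‖v‖²_H − C₂‖v‖²_V for all v ∈ H (with C₁, C₂ > 0). Then Ker D is closed in V (i.e., if a sequence uₙ ∈ Ker D converges to u in the V-norm, then u ∈ Ker D). -/
/- STATEMENT 0: H ⊆ V densely (embedding `e`), D : H → H* bounded (identified with an
operator `D : H →L[ℂ] H` via the Riesz map, so that ⟨Du, v⟩ = (Du, v)_H), with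
Ker D* = Ker D and the Gårding inequality. Then Ker D is closed in V: if uₙ ∈ Ker D and
e uₙ → x in V then x = e w for some w ∈ Ker D. -/

local notation "⟪" x ", " y "⟫" => @inner ℂ _ _ x y

open Filter Topology

theorem stmt0
    {H V : Type*}
    [NormedAddCommGroup H] [InnerProductSpace ℂ H] [CompleteSpace H]
    [NormedAddCommGroup V] [InnerProductSpace ℂ V] [CompleteSpace V]
    (e : H →L[ℂ] V) (he_inj : Function.Injective e) (he_dense : DenseRange e)
    (D : H →L[ℂ] H)
    (hker : ∀ u : H, D u = 0 ↔ ContinuousLinearMap.adjoint D u = 0)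
    (C₁ C₂ : ℝ) (hC₁ : 0 < C₁) (hC₂ : 0 < C₂)
    (hGarding : ∀ v : H, C₁ * ‖v‖ ^ 2 - C₂ * ‖e v‖ ^ 2 ≤ (⟪D v, v⟫).re)
    (u : ℕ → H) (hu : ∀ n, D (u n) = 0) (x : V)
    (hlim : Tendsto (fun n => e (u n)) atTop (𝓝 x)) :
    ∃ w : H, e w = x ∧ D w = 0 := by
  set K : ℝ := Real.sqrt (C₂ / C₁) with hK
  have hK0 : 0 ≤ K := Real.sqrt_nonneg _
  -- key estimate on the kernel
  have key : ∀ v : H, D v = 0 → ‖v‖ ≤ K * ‖e v‖ := by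
    intro v hv
    have h1 := hGarding v
    rw [hv] at h1
    simp only [inner_zero_left, Complex.zero_re] at h1
    have h2 : ‖v‖ ^ 2 ≤ (C₂ / C₁) * ‖e v‖ ^ 2 := by
      rw [div_mul_eq_mul_div, le_div_iff₀ hC₁]
      nlinarith
    have h3 : ‖v‖ ^ 2 ≤ (K * ‖e v‖) ^ 2 := by
      rw [mul_pow, hK, Real.sq_sqrt (by positivity)]
      exact h2
    have h4 := Real.sqrt_le_sqrt h3
    rwa [Real.sqrt_sq (norm_nonneg _), Real.sqrt_sq (by positivity)] at h4
  have hcauchyV : CauchySeq (fun n => e (u n)) := hlim.cauchySeq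
  have hcauchy : CauchySeq u := by
    rw [Metric.cauchySeq_iff] at hcauchyV ⊢
    intro ε hε
    obtain ⟨N, hN⟩ := hcauchyV (ε / (K + 1)) (by positivity)
    refine ⟨N, fun m hm n hn => ?_⟩
    have hk : D (u m - u n) = 0 := by simp [map_sub, hu]
    have := key _ hk
    rw [dist_eq_norm]
    calc ‖u m - u n‖ ≤ K * ‖e (u m - u n)‖ := this
      _ ≤ (K + 1) * ‖e (u m) - e (u n)‖ := by
          rw [map_sub]
          exact mul_le_mul_of_nonneg_right (by linarith) (norm_nonneg _)
      _ < (K + 1) * (ε / (K + 1)) := by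
          have := hN m hm n hn
          rw [dist_eq_norm] at this
          exact mul_lt_mul_of_pos_left this (by positivity)
      _ = ε := by field_simp
  obtain ⟨w, hw⟩ := cauchySeq_tendsto_of_complete hcauchy
  refine ⟨w, ?_, ?_⟩
  · exact tendsto_nhds_unique ((e.continuous.tendsto w).comp hw) hlim
  · have : Tendsto (fun n => D (u n)) atTop (𝓝 (D w)) :=
      (D.continuous.tendsto w).comp hw
    simp only [hu] at this
    exact (tendsto_nhds_unique tendsto_const_nhds this).symm
end

section
/- With the same setup, Π₀ is the unique projection from V onto K satisfying Π₀ (ι⁻¹E)⁻¹ Π₁^V = 0: that is, if P is any projection on V with range K satisfying Π₀^V(ι⁻¹E)P' = 0 where P' = I − P (equivalently P (ι⁻¹E)⁻¹Π₁^V = 0), then P = (E^{00})⁻¹ Π₀^V ι⁻¹ E. -/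
local notation "⟪" x ", " y "⟫" => @inner ℂ _ _ x y

noncomputable def Ezz {V : Type*} [NormedAddCommGroup V] [InnerProductSpace ℂ V]
    [CompleteSpace V] (K : Submodule ℂ V) [CompleteSpace K] (E : V →L[ℂ] V) : K →L[ℂ] K :=
  (K.orthogonalProjection).comp (E.comp K.subtypeL)

noncomputable def Pi0 {V : Type*} [NormedAddCommGroup V] [InnerProductSpace ℂ V]
    [CompleteSpace V] (K : Submodule ℂ V) [CompleteSpace K] (E : V →L[ℂ] V)
    (B : K →L[ℂ] K) : V →L[ℂ] V :=
  K.subtypeL.comp (B.comp ((K.orthogonalProjection).comp E))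

theorem Submodule.apply_eq_leftInverse_of_map_sub_eq_zero {R V N : Type*} [Ring R]
    [AddCommGroup V] [Module R V] [AddCommGroup N] [Module R N] {K : Submodule R V}
    (A : V →ₗ[R] N) (B : N → K) (hB : ∀ x : K, B (A x) = x) (P : V → V)
    (hPK : ∀ v, P v ∈ K) (hA : ∀ v, A (v - P v) = 0) (v : V) :
    P v = B (A v) := by
  have hAP : A v = A (P v) := sub_eq_zero.mp (by rw [← map_sub]; exact hA v)
  rw [hAP, hB ⟨P v, hPK v⟩]

theorem stmt4_general
    {V : Type*} [NormedAddCommGroup V] [InnerProductSpace ℂ V] [CompleteSpace V]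
    (K : Submodule ℂ V) [CompleteSpace K]
    (E : V →L[ℂ] V)
    (B : K →L[ℂ] K)
    (hB1 : B.comp (Ezz K E) = ContinuousLinearMap.id ℂ K)
    (P : V →L[ℂ] V)
    (hPrange : ∀ v : V, P v ∈ K)
    (hPcond : ∀ v : V, K.orthogonalProjection (E (v - P v)) = 0) :
    P = Pi0 K E B := by
  ext v
  exact Submodule.apply_eq_leftInverse_of_map_sub_eq_zero
    (K.orthogonalProjectionOnto ∘L E : V →ₗ[ℂ] K) B (fun x => congr($hB1 x)) P hPrange hPcond v

theorem stmt4
    {V : Type*} [NormedAddCommGroup V] [InnerProductSpace ℂ V] [CompleteSpace V]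
    (K : Submodule ℂ V) [CompleteSpace K]
    (E : V →L[ℂ] V) (c : ℝ) (hc : 0 < c)
    (hcoer : ∀ v : V, c * ‖v‖ ^ 2 ≤ (⟪E v, v⟫).re)
    (B : K →L[ℂ] K)
    (hB1 : B.comp (Ezz K E) = ContinuousLinearMap.id ℂ K)
    (hB2 : (Ezz K E).comp B = ContinuousLinearMap.id ℂ K)
    (P : V →L[ℂ] V)
    (hPproj : P.comp P = P)
    (hPrange : ∀ v : V, P v ∈ K)
    (hPid : ∀ x : V, x ∈ K → P x = x)
    (hPcond : ∀ v : V, K.orthogonalProjection (E (v - P v)) = 0) :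
    P = Pi0 K E B :=
  stmt4_general K E B hB1 P hPrange hPcond
end

section
/- Let H ⊆ V be Hilbert spaces, P : H → H* bounded satisfying the Gårding inequality Re⟨Pv,v⟩ ≥ ‖v‖²_H − (1+‖E‖)‖v‖²_V, let Π₁ : H → H be a bounded projection, and let S : Π₁V → Π₁V be bounded with Re⟨(P + Π₁*ηS²Π₁)w, w⟩ ≥ C‖w‖²_H for all w ∈ Π₁H (coercivity of P^# on the range of Π₁), where η = Π₁*ιΠ₁. Suppose P^# := P + Π₁*ηS²Π₁ satisfies: E₀₀ := Π₀*EΠ₀ is coercive on Π₀H (Re⟨E₀₀v,v⟩ ≥ C_E‖v‖²_H for v ∈ Π₀H, where Π₀ = I − Π₁) and P^# has lower-triangular block structure (Π₀*P^#Π₁ = 0). Then P^# satisfies a Gårding inequality on all of H: there exist C₁, C₂ > 0 with Re⟨P^# v, v⟩ ≥ C₁‖v‖²_H − C₂‖v‖²_V for all v ∈ H. -/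
/- `e : H →L[ℂ] V` is the embedding H ⊆ V, and `P : H → H*` is identified via the Riesz map of H
with an operator `P : H →L[ℂ] H`. `Pi0` is Π₀ on H and `Q₀` is Π₀ on V, with Π₁ = I − Π₀; since
η = Π₁* ι Π₁, the pairing of P^# is `Bhash u v = ⟨Pu, v⟩ + (S²Π₁u, Π₁v)_V`. -/

local notation "⟪" x ", " y "⟫" => @inner ℂ _ _ x y

/-- The sesquilinear pairing of `P^# = P + Π₁* η S² Π₁`. -/
noncomputable def Bhash {H V : Type*}
    [NormedAddCommGroup H] [InnerProductSpace ℂ H]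
    [NormedAddCommGroup V] [InnerProductSpace ℂ V]
    (e : H →L[ℂ] V) (P : H →L[ℂ] H) (Q₀ S : V →L[ℂ] V) (u v : H) : ℂ :=
  ⟪P u, v⟫ + ⟪S (S (e u - Q₀ (e u))), e v - Q₀ (e v)⟫

/-!
Split `v = Π₀v + Π₁v`. By lower-triangularity the quadratic form of `P^#` has no `(Π₁v, Π₀v)`
block, and on `Π₀H` the `S²` part vanishes, so
`Re⟨P^# v, v⟩ = Re⟨PΠ₀v, Π₀v⟩ + Re⟨PΠ₀v, Π₁v⟩ + Re⟨P^# Π₁v, Π₁v⟩`.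
The last term is at least `C‖Π₁v‖²`; the first two are bounded below by `‖P‖` times products
involving `‖Π₀v‖`, and Young's inequality absorbs the cross term into `C‖Π₁v‖²`. What remains is a
multiple of `‖Π₀v‖²_H = ‖Π₀v‖²_V`, which is controlled by `‖v‖²_V` since `Π₀` is bounded on `V`.
-/

lemma div_four_mul_sq_le_of_le_add {C M a b r : ℝ} (hC : 0 < C) (hr : 0 ≤ r) (hrab : r ≤ a + b) :
    C / 4 * r ^ 2 ≤ C * b ^ 2 - M * (a * b) + (C / 2 + M ^ 2 / C) * a ^ 2 := by
  have hsq : r ^ 2 ≤ 2 * a ^ 2 + 2 * b ^ 2 := by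
    nlinarith [pow_le_pow_left₀ hr hrab 2, sq_nonneg (a - b)]
  have hyoung : M * (a * b) ≤ M ^ 2 / C * a ^ 2 + C / 4 * b ^ 2 := by
    have h := two_mul_le_add_mul_sq (a := M * a) (b := b) (ε := 2 / C) (by positivity)
    rw [inv_div] at h
    linear_combination h / 2
  nlinarith

namespace ContinuousLinearMap

variable {𝕜 E : Type*} [RCLike 𝕜] [NormedAddCommGroup E] [InnerProductSpace 𝕜 E]

lemma neg_opNorm_mul_le_re_inner (T : E →L[𝕜] E) (x y : E) :
    -(‖T‖ * (‖x‖ * ‖y‖)) ≤ RCLike.re (inner 𝕜 (T x) y) := by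
  have h : RCLike.re (inner 𝕜 (-T x) y) ≤ ‖T x‖ * ‖y‖ := by
    simpa only [norm_neg] using re_inner_le_norm (-T x) y
  rw [inner_neg_left, map_neg] at h
  have hT : ‖T x‖ * ‖y‖ ≤ ‖T‖ * (‖x‖ * ‖y‖) := by
    rw [← mul_assoc]; exact mul_le_mul_of_nonneg_right (T.le_opNorm x) (norm_nonneg y)
  linarith

end ContinuousLinearMap

section Bhash

variable {H V : Type*} [NormedAddCommGroup H] [InnerProductSpace ℂ H]
  [NormedAddCommGroup V] [InnerProductSpace ℂ V]
  {e : H →L[ℂ] V} {P Pi0 : H →L[ℂ] H} {Q₀ S : V →L[ℂ] V}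

lemma Bhash_add_left (u u' v : H) :
    Bhash e P Q₀ S (u + u') v = Bhash e P Q₀ S u v + Bhash e P Q₀ S u' v := by
  simp only [Bhash, map_add, inner_add_left]
  rw [add_sub_add_comm, map_add, map_add, inner_add_left]
  ring

lemma Bhash_add_right (u v v' : H) :
    Bhash e P Q₀ S u (v + v') = Bhash e P Q₀ S u v + Bhash e P Q₀ S u v' := by
  simp only [Bhash, map_add, inner_add_right]
  rw [add_sub_add_comm, inner_add_right]
  ring

lemma Bhash_proj_left (hproj : Pi0.comp Pi0 = Pi0) (hcompat : ∀ v : H, Q₀ (e v) = e (Pi0 v))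
    (u v : H) : Bhash e P Q₀ S (Pi0 u) v = ⟪P (Pi0 u), v⟫ := by
  rw [Bhash, hcompat, ← Pi0.comp_apply, hproj, sub_self, map_zero, map_zero, inner_zero_left,
    add_zero]

lemma Bhash_self_eq_of_lowerTriangular (hproj : Pi0.comp Pi0 = Pi0)
    (hcompat : ∀ v : H, Q₀ (e v) = e (Pi0 v))
    (htri : ∀ u v : H, Bhash e P Q₀ S (u - Pi0 u) (Pi0 v) = 0) (v : H) :
    Bhash e P Q₀ S v v = ⟪P (Pi0 v), Pi0 v⟫ + ⟪P (Pi0 v), v - Pi0 v⟫ +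
      Bhash e P Q₀ S (v - Pi0 v) (v - Pi0 v) := by
  calc Bhash e P Q₀ S v v
      = Bhash e P Q₀ S (Pi0 v + (v - Pi0 v)) v := by rw [add_sub_cancel]
    _ = Bhash e P Q₀ S (Pi0 v) v + Bhash e P Q₀ S (v - Pi0 v) (Pi0 v + (v - Pi0 v)) := by
        rw [Bhash_add_left, add_sub_cancel]
    _ = _ := by
        rw [Bhash_add_right, htri, zero_add, Bhash_proj_left hproj hcompat, ← inner_add_right,
          add_sub_cancel]

end Bhash

theorem stmt13_general
    {H V : Type*}
    [NormedAddCommGroup H] [InnerProductSpace ℂ H]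
    [NormedAddCommGroup V] [InnerProductSpace ℂ V]
    (e : H →L[ℂ] V)
    (P Pi0 : H →L[ℂ] H) (Q₀ S : V →L[ℂ] V)
    (hproj : Pi0.comp Pi0 = Pi0)
    (hcompat : ∀ v : H, Q₀ (e v) = e (Pi0 v))
    (hnorm : ∀ v : H, ‖e (Pi0 v)‖ = ‖Pi0 v‖)
    (C : ℝ) (hC : 0 < C)
    (hcoer : ∀ w : H, C * ‖w - Pi0 w‖ ^ 2 ≤ (Bhash e P Q₀ S (w - Pi0 w) (w - Pi0 w)).re)
    (htri : ∀ u v : H, Bhash e P Q₀ S (u - Pi0 u) (Pi0 v) = 0) :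
    ∃ C₁ > 0, ∃ C₂ > 0, ∀ v : H,
      C₁ * ‖v‖ ^ 2 - C₂ * ‖e v‖ ^ 2 ≤ (Bhash e P Q₀ S v v).re := by
  refine ⟨C / 4, by positivity, (C / 2 + ‖P‖ + ‖P‖ ^ 2 / C) * ‖Q₀‖ ^ 2 + 1, by positivity,
    fun v => ?_⟩
  have hproj_le : ‖Pi0 v‖ ≤ ‖Q₀‖ * ‖e v‖ := by
    rw [← hnorm v, ← hcompat v]; exact Q₀.le_opNorm _
  have hproj_sq : (C / 2 + ‖P‖ + ‖P‖ ^ 2 / C) * ‖Pi0 v‖ ^ 2 ≤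
      (C / 2 + ‖P‖ + ‖P‖ ^ 2 / C) * ‖Q₀‖ ^ 2 * ‖e v‖ ^ 2 := by
    rw [mul_assoc, ← mul_pow]; gcongr
  have hdiag := P.neg_opNorm_mul_le_re_inner (Pi0 v) (Pi0 v)
  have hcross := P.neg_opNorm_mul_le_re_inner (Pi0 v) (v - Pi0 v)
  have habsorb := div_four_mul_sq_le_of_le_add (M := ‖P‖) hC (norm_nonneg v)
    (norm_le_norm_add_norm_sub' v (Pi0 v))
  rw [RCLike.re_to_complex, ← sq] at hdiag
  rw [RCLike.re_to_complex] at hcross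
  rw [Bhash_self_eq_of_lowerTriangular hproj hcompat htri, Complex.add_re, Complex.add_re]
  linarith [hcoer v, sq_nonneg ‖e v‖]

theorem stmt13
    {H V : Type*}
    [NormedAddCommGroup H] [InnerProductSpace ℂ H] [CompleteSpace H]
    [NormedAddCommGroup V] [InnerProductSpace ℂ V] [CompleteSpace V]
    (e : H →L[ℂ] V)
    (P E Pi0 : H →L[ℂ] H) (Q₀ S : V →L[ℂ] V)
    (hproj : Pi0.comp Pi0 = Pi0)
    (hcompat : ∀ v : H, Q₀ (e v) = e (Pi0 v))
    (hnorm : ∀ v : H, ‖e (Pi0 v)‖ = ‖Pi0 v‖)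
    (hP : ∀ v : H, ‖v‖ ^ 2 - (1 + ‖E‖) * ‖e v‖ ^ 2 ≤ (⟪P v, v⟫).re)
    (CE : ℝ) (hCE : 0 < CE)
    (hE00 : ∀ v : H, CE * ‖Pi0 v‖ ^ 2 ≤ (⟪E (Pi0 v), Pi0 v⟫).re)
    (C : ℝ) (hC : 0 < C)
    (hcoer : ∀ w : H, C * ‖w - Pi0 w‖ ^ 2 ≤ (Bhash e P Q₀ S (w - Pi0 w) (w - Pi0 w)).re)
    (htri : ∀ u v : H, Bhash e P Q₀ S (u - Pi0 u) (Pi0 v) = 0) :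
    ∃ C₁ > 0, ∃ C₂ > 0, ∀ v : H,
      C₁ * ‖v‖ ^ 2 - C₂ * ‖e v‖ ^ 2 ≤ (Bhash e P Q₀ S v v).re :=
  stmt13_general e P Pi0 Q₀ S hproj hcompat hnorm C hC hcoer htri
end

section
/- Let P satisfy Assumption: P = D − E with Gårding inequality and E coercive on V, and let projections Π₀ (onto Ker D), Π₁ be as in the abstract framework with ‖Π₀v‖_H = ‖Π₀v‖_V. Suppose w ∈ H and u_h ∈ H_h satisfy ⟨E(u − u_h), v_h⟩ = 0 for all v_h ∈ H_h ∩ Ker D (discrete E-orthogonality), and let J : H_h → H_h satisfy: (i) Jw_h = w_h for all w_h ∈ H_h, (ii) J is defined on Π₁H_h with values in H_h, (iii) JΠ₀w_h ∈ H_h ∩ Ker D for all w_h ∈ H_h. Then for every w_h ∈ H_h with ⟨Ew_h, v_h⟩ = 0 for all v_h ∈ H_h ∩ Ker D, one has C_E ‖Π₀w_h‖²_V ≤ |⟨EΠ₀w_h, (I−J)Π₁w_h⟩|, and hence ‖Π₀w_h‖_V ≤ (‖E‖/C_E)‖(I−J)Π₁w_h‖_V. -/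
/- STATEMENT 15: divergence-conformity bound.  In a Hilbert space V (containing the
energy space H), let E : V → V* be bounded and coercive, identified via the Riesz map
with E : V →L[ℂ] V so that ⟨Ew, v⟩ = (Ew, v)_V; KD = Ker D; Pi0 (= Π₀) the projection of
V onto KD satisfying Π₀*EΠ₁ = 0, i.e. ⟨Ew, v⟩ = ⟨EΠ₀w, v⟩ for all v ∈ KD; Π₁ = I − Π₀;
Hh a closed subspace (the finite-element space); J linear with (i) J w_h = w_h on Hh,
(ii) J defined on Π₁Hh, (iii) JΠ₀w_h ∈ Hh ∩ KD.  Then for every w_h ∈ Hh that is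
discretely E-orthogonal to Hh ∩ KD,
C_E ‖Π₀w_h‖²_V ≤ |⟨EΠ₀w_h, (I−J)Π₁w_h⟩| and ‖Π₀w_h‖_V ≤ (‖E‖/C_E)‖(I−J)Π₁w_h‖_V. -/

local notation "⟪" x ", " y "⟫" => @inner ℂ _ _ x y

theorem stmt15
    {V : Type*} [NormedAddCommGroup V] [InnerProductSpace ℂ V] [CompleteSpace V]
    (E Pi0 J : V →L[ℂ] V)
    (CE : ℝ) (hCE : 0 < CE)
    (hcoer : ∀ v : V, CE * ‖v‖ ^ 2 ≤ (⟪E v, v⟫).re)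
    (KD : Submodule ℂ V)
    (hproj : Pi0.comp Pi0 = Pi0)
    (hrange : ∀ v : V, Pi0 v ∈ KD)
    (hkey : ∀ w : V, ∀ v ∈ KD, ⟪E w, v⟫ = ⟪E (Pi0 w), v⟫)
    (Hh : Submodule ℂ V) (hHh : IsClosed (Hh : Set V))
    (hJ_id : ∀ wh ∈ Hh, J wh = wh)
    (hJ_ker : ∀ wh ∈ Hh, J (Pi0 wh) ∈ Hh ∧ J (Pi0 wh) ∈ KD) :
    ∀ wh ∈ Hh, (∀ vh : V, vh ∈ Hh → vh ∈ KD → ⟪E wh, vh⟫ = 0) →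
      CE * ‖Pi0 wh‖ ^ 2 ≤
        ‖⟪E (Pi0 wh), ((wh - Pi0 wh) - J (wh - Pi0 wh))⟫‖ ∧
      ‖Pi0 wh‖ ≤ (‖E‖ / CE) * ‖(wh - Pi0 wh) - J (wh - Pi0 wh)‖ := by
  intro wh hwh horth
  set p := Pi0 wh with hp
  have hJp := hJ_ker wh hwh
  have hx : (wh - p) - J (wh - p) = J p - p := by
    have : J (wh - p) = wh - J p := by
      rw [map_sub, hJ_id wh hwh]
    rw [this]; abel
  have hip : ⟪E p, (wh - p) - J (wh - p)⟫ = -⟪E p, p⟫ := by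
    rw [hx, inner_sub_right]
    have h1 : ⟪E p, J p⟫ = 0 := by
      rw [← hkey wh (J p) hJp.2]
      exact horth (J p) hJp.1 hJp.2
    rw [h1]; ring
  have h1 : CE * ‖p‖ ^ 2 ≤ ‖⟪E p, (wh - p) - J (wh - p)⟫‖ := by
    rw [hip, norm_neg]
    calc CE * ‖p‖ ^ 2 ≤ (⟪E p, p⟫).re := hcoer p
      _ ≤ ‖⟪E p, p⟫‖ := Complex.re_le_norm _
  refine ⟨h1, ?_⟩
  have h2 : ‖⟪E p, (wh - p) - J (wh - p)⟫‖ ≤ ‖E‖ * ‖p‖ * ‖(wh - p) - J (wh - p)‖ := by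
    calc ‖⟪E p, (wh - p) - J (wh - p)⟫‖ ≤ ‖E p‖ * ‖(wh - p) - J (wh - p)‖ :=
          norm_inner_le_norm _ _
      _ ≤ (‖E‖ * ‖p‖) * ‖(wh - p) - J (wh - p)‖ := by
          gcongr; exact E.le_opNorm p
  have h3 : CE * ‖p‖ ^ 2 ≤ ‖E‖ * ‖p‖ * ‖(wh - p) - J (wh - p)‖ := h1.trans h2
  rcases eq_or_ne ‖p‖ 0 with h0 | h0
  · rw [h0]
    positivity
  · have hpos : 0 < ‖p‖ := lt_of_le_of_ne (norm_nonneg _) (Ne.symm h0)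
    rw [div_mul_eq_mul_div, le_div_iff₀ hCE]
    nlinarith [h3]
end

section
/- Let F : K̂ → K be a C^{p+1} diffeomorphism between bounded open sets in ℝ³ satisfying ‖∂^α F‖_{L∞(K̂)} ≤ C L (h/L)^{|α|} for 1 ≤ |α| ≤ p+1. Then for every multi-index α with 1 ≤ |α| ≤ p, ‖∂^α(det(DF)(DF)⁻¹)‖_{L∞(K̂)} ≤ C' L² (h/L)^{|α|+2}, where det(DF)(DF)⁻¹ is the cofactor matrix of the Jacobian DF, and C' depends only on C, p, and the dimension. -/
/-!
Each entry of the cofactor matrix `det(DF) (DF)⁻¹ = adj(DF)` of a `3 × 3` Jacobian is a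
difference of two products of first partial derivatives of `F`. An `n`-th derivative of a
first partial derivative is an `(n+1)`-th derivative of `F`, hence bounded by
`C L (h/L)^(n+1) = (C h) (h/L)^n`. For bounds of this geometric shape the Leibniz rule loses only
the factor `∑ₖ (n choose k) = 2^n`, so each product of two partial derivatives has `n`-th
derivative at most `2^n C² L² (h/L)^(n+2)`, and a cofactor at most twice that; the constant
`C' = 2^(p+1) C²` covers all `n ≤ p`.
-/

open Finset

variable {𝕜 : Type*} [NontriviallyNormedField 𝕜] {E : Type*} [NormedAddCommGroup E]
  [NormedSpace 𝕜 E] {s : Set E} {x : E}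

section Pi

variable {ι G : Type*} [Fintype ι] [NormedAddCommGroup G] [NormedSpace 𝕜 G]
  {f : E → ι → G} {n : ℕ}

theorem iteratedFDerivWithin_apply_apply_pi (hf : ContDiffWithinAt 𝕜 n f s x)
    (hs : UniqueDiffOn 𝕜 s) (hx : x ∈ s) (i : ι) (v : Fin n → E) :
    iteratedFDerivWithin 𝕜 n (fun y => f y i) s x v = iteratedFDerivWithin 𝕜 n f s x v i := by
  change iteratedFDerivWithin 𝕜 n (ContinuousLinearMap.proj (R := 𝕜) i ∘ f) s x v = _
  rw [(ContinuousLinearMap.proj (R := 𝕜) i).iteratedFDerivWithin_comp_left hf hs hx le_rfl]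
  rfl

theorem norm_iteratedFDerivWithin_apply_le (hf : ContDiffWithinAt 𝕜 n f s x)
    (hs : UniqueDiffOn 𝕜 s) (hx : x ∈ s) (i : ι) :
    ‖iteratedFDerivWithin 𝕜 n (fun y => f y i) s x‖ ≤ ‖iteratedFDerivWithin 𝕜 n f s x‖ :=
  ContinuousMultilinearMap.opNorm_le_bound (norm_nonneg _) fun v => by
    rw [iteratedFDerivWithin_apply_apply_pi hf hs hx]
    exact (norm_le_pi_norm _ i).trans (ContinuousMultilinearMap.le_opNorm _ _)

theorem norm_iteratedFDerivWithin_le_of_forall_apply_le (hf : ContDiffWithinAt 𝕜 n f s x)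
    (hs : UniqueDiffOn 𝕜 s) (hx : x ∈ s) {M : ℝ} (hM : 0 ≤ M)
    (hbound : ∀ i, ‖iteratedFDerivWithin 𝕜 n (fun y => f y i) s x‖ ≤ M) :
    ‖iteratedFDerivWithin 𝕜 n f s x‖ ≤ M := by
  refine ContinuousMultilinearMap.opNorm_le_bound hM fun v => ?_
  refine (pi_norm_le_iff_of_nonneg (by positivity)).2 fun i => ?_
  rw [← iteratedFDerivWithin_apply_apply_pi hf hs hx]
  exact (ContinuousMultilinearMap.le_opNorm _ _).trans (by gcongr; exact hbound i)

theorem norm_iteratedFDerivWithin_le_of_forall_apply_apply_le {κ : Type*} [Fintype κ]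
    {f : E → ι → κ → G} (hf : ∀ i j, ContDiffOn 𝕜 n (fun y => f y i j) s)
    (hs : UniqueDiffOn 𝕜 s) (hx : x ∈ s) {M : ℝ} (hM : 0 ≤ M)
    (hbound : ∀ i j, ‖iteratedFDerivWithin 𝕜 n (fun y => f y i j) s x‖ ≤ M) :
    ‖iteratedFDerivWithin 𝕜 n f s x‖ ≤ M := by
  have hrow (i : ι) : ContDiffOn 𝕜 n (fun y => f y i) s := contDiffOn_pi.mpr (hf i)
  refine norm_iteratedFDerivWithin_le_of_forall_apply_le (contDiffOn_pi.mpr hrow x hx) hs hx hM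
    fun i => ?_
  exact norm_iteratedFDerivWithin_le_of_forall_apply_le (hrow i x hx) hs hx hM (hbound i)

theorem norm_iteratedFDerivWithin_fderivWithin_apply_apply_le (hf : ContDiffOn 𝕜 (n + 1) f s)
    (hs : UniqueDiffOn 𝕜 s) (hx : x ∈ s) (v : E) (i : ι) :
    ‖iteratedFDerivWithin 𝕜 n (fun y => fderivWithin 𝕜 f s y v i) s x‖ ≤
      ‖v‖ * ‖iteratedFDerivWithin 𝕜 (n + 1) f s x‖ := by
  have hDf : ContDiffOn 𝕜 n (fderivWithin 𝕜 f s) s := hf.fderivWithin hs le_rfl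
  refine (norm_iteratedFDerivWithin_apply_le
    (hDf.clm_apply contDiffOn_const x hx) hs hx i).trans ?_
  rw [← norm_iteratedFDerivWithin_fderivWithin hs hx]
  exact norm_iteratedFDerivWithin_clm_apply_const (hDf x hx) hs hx le_rfl

end Pi

theorem norm_iteratedFDerivWithin_mul_le_of_geometric {A : Type*} [NormedRing A]
    [NormedAlgebra 𝕜 A] {f g : E → A} {N : WithTop ℕ∞} (hf : ContDiffOn 𝕜 N f s)
    (hg : ContDiffOn 𝕜 N g s) (hs : UniqueDiffOn 𝕜 s) (hx : x ∈ s) {n : ℕ} (hn : n ≤ N)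
    {a b q : ℝ} (hfa : ∀ i ≤ n, ‖iteratedFDerivWithin 𝕜 i f s x‖ ≤ a * q ^ i)
    (hgb : ∀ i ≤ n, ‖iteratedFDerivWithin 𝕜 i g s x‖ ≤ b * q ^ i) :
    ‖iteratedFDerivWithin 𝕜 n (fun y => f y * g y) s x‖ ≤ 2 ^ n * (a * b * q ^ n) := by
  refine (norm_iteratedFDerivWithin_mul_le hf hg hs hx hn).trans ?_
  have hterm : ∀ i ∈ range (n + 1), (n.choose i : ℝ) * ‖iteratedFDerivWithin 𝕜 i f s x‖ *
      ‖iteratedFDerivWithin 𝕜 (n - i) g s x‖ ≤ n.choose i * (a * b * q ^ n) := by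
    intro i hi
    have hin : i ≤ n := Nat.lt_succ_iff.mp (mem_range.mp hi)
    have hf_i := hfa i hin
    have hg_i := hgb (n - i) (Nat.sub_le n i)
    calc (n.choose i : ℝ) * ‖iteratedFDerivWithin 𝕜 i f s x‖ *
          ‖iteratedFDerivWithin 𝕜 (n - i) g s x‖
        ≤ n.choose i * (a * q ^ i) * (b * q ^ (n - i)) :=
          mul_le_mul (by gcongr) hg_i (norm_nonneg _)
            (mul_nonneg (Nat.cast_nonneg _) ((norm_nonneg _).trans hf_i))
      _ = n.choose i * (a * b * q ^ (i + (n - i))) := by ring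
      _ = n.choose i * (a * b * q ^ n) := by rw [Nat.add_sub_cancel' hin]
  calc _ ≤ ∑ i ∈ range (n + 1), (n.choose i : ℝ) * (a * b * q ^ n) := sum_le_sum hterm
    _ = 2 ^ n * (a * b * q ^ n) := by
      rw [← sum_mul, ← Nat.cast_sum, Nat.sum_range_choose, Nat.cast_pow, Nat.cast_ofNat]

theorem Matrix.exists_adjugate_fin_three_apply_eq_sub {R : Type*} [CommRing R] (i j : Fin 3) :
    ∃ a b c d e f g k : Fin 3, ∀ M : Matrix (Fin 3) (Fin 3) R,
      M.adjugate i j = M a b * M c d - M e f * M g k := by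
  fin_cases i <;> fin_cases j <;>
    simp only [Matrix.adjugate_fin_three, Matrix.of_apply, neg_add_eq_sub] <;>
    exact ⟨_, _, _, _, _, _, _, _, fun _ => rfl⟩

section Adjugate

variable {R : Type*} [NormedCommRing R] [NormedAlgebra 𝕜 R] {M : E → Matrix (Fin 3) (Fin 3) R}
  {N : WithTop ℕ∞}

theorem ContDiffOn.adjugate_fin_three_apply (hM : ∀ a b, ContDiffOn 𝕜 N (fun y => M y a b) s)
    (i j : Fin 3) : ContDiffOn 𝕜 N (fun y => (M y).adjugate i j) s := by
  obtain ⟨a, b, c, d, e, f, g, k, hadj⟩ :=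
    Matrix.exists_adjugate_fin_three_apply_eq_sub (R := R) i j
  simp only [hadj]
  exact ((hM a b).mul (hM c d)).sub ((hM e f).mul (hM g k))

theorem norm_iteratedFDerivWithin_adjugate_fin_three_apply_le
    (hM : ∀ a b, ContDiffOn 𝕜 N (fun y => M y a b) s) (hs : UniqueDiffOn 𝕜 s) (hx : x ∈ s)
    {n : ℕ} (hn : n ≤ N) {c q : ℝ}
    (hbound : ∀ a b, ∀ i ≤ n, ‖iteratedFDerivWithin 𝕜 i (fun y => M y a b) s x‖ ≤ c * q ^ i)
    (i j : Fin 3) :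
    ‖iteratedFDerivWithin 𝕜 n (fun y => (M y).adjugate i j) s x‖ ≤
      2 ^ (n + 1) * (c ^ 2 * q ^ n) := by
  obtain ⟨a, b, a', b', e, f, e', f', hadj⟩ :=
    Matrix.exists_adjugate_fin_three_apply_eq_sub (R := R) i j
  have hprod : ∀ a b a' b', ‖iteratedFDerivWithin 𝕜 n (fun y => M y a b * M y a' b') s x‖ ≤
      2 ^ n * (c * c * q ^ n) := fun a b a' b' =>
    norm_iteratedFDerivWithin_mul_le_of_geometric (hM a b) (hM a' b') hs hx hn
      (hbound a b) (hbound a' b')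
  have hprod_smooth (a b a' b' : Fin 3) :
      ContDiffWithinAt 𝕜 n (fun y => M y a b * M y a' b') s x :=
    (((hM a b).mul (hM a' b')).of_le hn) x hx
  have hsub := iteratedFDerivWithin_sub_apply (hprod_smooth a b a' b') (hprod_smooth e f e' f') hs hx
  rw [Pi.sub_def] at hsub
  simp only [hadj, hsub]
  calc _ ≤ _ := norm_sub_le _ _
    _ ≤ 2 ^ n * (c * c * q ^ n) + 2 ^ n * (c * c * q ^ n) :=
      add_le_add (hprod a b a' b') (hprod e f e' f')
    _ = 2 ^ (n + 1) * (c ^ 2 * q ^ n) := by ring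

end Adjugate

theorem stmt17_general
    (p : ℕ) (Khat : Set (Fin 3 → ℝ)) (hKhat : IsOpen Khat)
    (F : (Fin 3 → ℝ) → (Fin 3 → ℝ))
    (hF : ContDiffOn ℝ (p + 1) F Khat)
    (h L C : ℝ) (hC : 0 < C)
    (hFbound : ∀ x ∈ Khat, ∀ n : ℕ, 1 ≤ n → n ≤ p + 1 →
      ‖iteratedFDerivWithin ℝ n F Khat x‖ ≤ C * L * (h / L) ^ n) :
    ∃ C' > 0, ∀ x ∈ Khat, ∀ n : ℕ, 1 ≤ n → n ≤ p →
      ‖iteratedFDerivWithin ℝ n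
          (fun y : Fin 3 → ℝ => fun i j : Fin 3 =>
            (Matrix.adjugate
              (Matrix.of fun a b : Fin 3 => fderivWithin ℝ F Khat y (Pi.single b 1) a)) i j)
          Khat x‖ ≤ C' * L ^ 2 * (h / L) ^ (n + 2) := by
  have hs : UniqueDiffOn ℝ Khat := hKhat.uniqueDiffOn
  set J : (Fin 3 → ℝ) → Matrix (Fin 3) (Fin 3) ℝ :=
    fun y => Matrix.of fun a b => fderivWithin ℝ F Khat y (Pi.single b 1) a
  have hJ : ∀ a b, ContDiffOn ℝ p (fun y => J y a b) Khat := fun a b =>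
    contDiffOn_pi.mp ((hF.fderivWithin hs le_rfl).clm_apply contDiffOn_const) a
  refine ⟨2 ^ (p + 1) * C ^ 2, by positivity, fun x hx n _ hnp => ?_⟩
  have hnp' : (n : WithTop ℕ∞) ≤ p := by exact_mod_cast hnp
  have hJbound : ∀ a b, ∀ i ≤ n, ‖iteratedFDerivWithin ℝ i (fun y => J y a b) Khat x‖ ≤
      C * L * (h / L) * (h / L) ^ i := fun a b i hi => calc
    _ ≤ ‖(Pi.single b 1 : Fin 3 → ℝ)‖ * ‖iteratedFDerivWithin ℝ (i + 1) F Khat x‖ :=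
      norm_iteratedFDerivWithin_fderivWithin_apply_apply_le
        (hF.of_le (by exact_mod_cast by omega)) hs hx _ a
    _ ≤ C * L * (h / L) ^ (i + 1) := by
      rw [Pi.norm_single, norm_one, one_mul]
      exact hFbound x hx (i + 1) (by omega) (by omega)
    _ = C * L * (h / L) * (h / L) ^ i := by ring
  have hadj := norm_iteratedFDerivWithin_adjugate_fin_three_apply_le hJ hs hx hnp' hJbound
  have hX : 0 ≤ (C * L * (h / L)) ^ 2 * (h / L) ^ n :=
    nonneg_of_mul_nonneg_right ((norm_nonneg _).trans (hadj 0 0)) (by positivity)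
  have hle : 2 ^ (n + 1) * ((C * L * (h / L)) ^ 2 * (h / L) ^ n) ≤
      2 ^ (p + 1) * C ^ 2 * L ^ 2 * (h / L) ^ (n + 2) := calc
    _ ≤ 2 ^ (p + 1) * ((C * L * (h / L)) ^ 2 * (h / L) ^ n) := by gcongr; norm_num
    _ = _ := by ring
  exact norm_iteratedFDerivWithin_le_of_forall_apply_apply_le
    (fun i j => (ContDiffOn.adjugate_fin_three_apply hJ i j).of_le hnp') hs hx
    ((norm_nonneg _).trans ((hadj 0 0).trans hle)) fun i j => (hadj i j).trans hle

theorem stmt17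
    (p : ℕ) (Khat : Set (Fin 3 → ℝ)) (hKhat : IsOpen Khat)
    (F : (Fin 3 → ℝ) → (Fin 3 → ℝ))
    (hF : ContDiffOn ℝ (p + 1) F Khat) (hinj : Set.InjOn F Khat)
    (h L C : ℝ) (hh : 0 < h) (hhL : h ≤ L) (hC : 0 < C)
    (hFbound : ∀ x ∈ Khat, ∀ n : ℕ, 1 ≤ n → n ≤ p + 1 →
      ‖iteratedFDerivWithin ℝ n F Khat x‖ ≤ C * L * (h / L) ^ n) :
    ∃ C' > 0, ∀ x ∈ Khat, ∀ n : ℕ, 1 ≤ n → n ≤ p →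
      ‖iteratedFDerivWithin ℝ n
          (fun y : Fin 3 → ℝ => fun i j : Fin 3 =>
            (Matrix.adjugate
              (Matrix.of fun a b : Fin 3 => fderivWithin ℝ F Khat y (Pi.single b 1) a)) i j)
          Khat x‖ ≤ C' * L ^ 2 * (h / L) ^ (n + 2) :=
  stmt17_general p Khat hKhat F hF h L C hC hFbound
end

section
/- For 0 ≤ θ < π/2 let f : [0,∞) → ℝ be C¹ with f = 0 and f' = 0 exactly on [0, R₋], f' ≥ 0, f(r) = r for r ≥ R₊, and r ↦ f(r)/r nondecreasing. Set f_θ := f·tanθ, α(r) := 1 + i f_θ'(r), β(r) := 1 + i f_θ(r)/r, and let D(r) := diag(β²/α, α, α) and H the spherical-coordinate rotation matrix (an orthogonal matrix). Then for every ε > 0 there exists c > 0 such that for all ε ≤ θ ≤ π/2 − ε, all r > 0, and all ξ ∈ ℂ³: Re(ξ* H D(r) Hᵀ ξ) ≥ c|ξ|² and Re(ξ* (H D(r) Hᵀ)⁻¹ ξ) ≥ c|ξ|²; moreover |ξ* H D(r) Hᵀ ζ| ≤ C|ξ||ζ| for a constant C depending only on ε. -/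
/- STATEMENT 19: uniform coercivity and boundedness of the radial-PML Maxwell
coefficient matrix M = H D(r) Hᵀ with D(r) = diag(β²/α, α, α), α = 1 + i f_θ'(r),
β = 1 + i f_θ(r)/r, f_θ = f tanθ, and H the spherical-coordinate rotation matrix. -/

open Real Matrix

noncomputable def pmlAlpha (f : ℝ → ℝ) (θ r : ℝ) : ℂ :=
  1 + Complex.I * (Real.tan θ * deriv f r)

noncomputable def pmlBeta (f : ℝ → ℝ) (θ r : ℝ) : ℂ :=
  1 + Complex.I * (Real.tan θ * f r / r)

noncomputable def sphericalH (φ ϕ : ℝ) : Matrix (Fin 3) (Fin 3) ℝ :=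
  !![Real.sin φ * Real.cos ϕ, Real.cos φ * Real.cos ϕ, -Real.sin ϕ;
     Real.sin φ * Real.sin ϕ, Real.cos φ * Real.sin ϕ, Real.cos ϕ;
     Real.cos φ, -Real.sin φ, 0]

noncomputable def pmlD (f : ℝ → ℝ) (θ r : ℝ) : Matrix (Fin 3) (Fin 3) ℂ :=
  Matrix.diagonal ![pmlBeta f θ r ^ 2 * (pmlAlpha f θ r)⁻¹, pmlAlpha f θ r, pmlAlpha f θ r]

noncomputable def pmlM (f : ℝ → ℝ) (θ r φ ϕ : ℝ) : Matrix (Fin 3) (Fin 3) ℂ :=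
  ((sphericalH φ ϕ).map (fun x : ℝ => (x : ℂ))) * pmlD f θ r *
    (((sphericalH φ ϕ).transpose).map (fun x : ℝ => (x : ℂ)))

/-!
Since `H` is real orthogonal, `U = H` viewed over `ℂ` is unitary and `M = U D U*`,
`M⁻¹ = U D⁻¹ U*`, so every estimate reduces to the diagonal entries. With `a = f_θ'(r)` and
`b = f_θ(r)/r`, monotonicity of `f(r)/r` together with `f = 0` near `0` gives `0 ≤ b ≤ a`, and then
`Re(β²/α) = (1 - b² + 2ab)/(1 + a²)`, `Re(α/β²) = (1 - b² + 2ab)/(1 + b²)²`, `Re α = 1` and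
`Re α⁻¹ = 1/(1 + a²)` are all at least `1/(1 + a²)`, while every entry has modulus at most `1 + a²`.
Finally `a` is bounded uniformly: `tan θ ≤ tan(π/2 - ε)`, and `f'` is continuous on `[0, R₊]` and
equal to `1` beyond `R₊`.
-/

section UnitaryConjugation

variable {ι : Type*} [Fintype ι] [DecidableEq ι]

lemma dotProduct_conj_diagonal_mulVec (U : Matrix ι ι ℂ) (d ξ ζ : ι → ℂ) :
    star ξ ⬝ᵥ (U * diagonal d * star U) *ᵥ ζ
      = ∑ j, d j * star ((star U *ᵥ ξ) j) * (star U *ᵥ ζ) j := by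
  have hξ : star ξ ᵥ* U = star (star U *ᵥ ξ) := by
    rw [star_mulVec, star_eq_conjTranspose, conjTranspose_conjTranspose]
  rw [← mulVec_mulVec, ← mulVec_mulVec, dotProduct_mulVec, hξ, dotProduct]
  simp only [mulVec_diagonal, Pi.star_apply]
  exact Finset.sum_congr rfl fun j _ => by ring

variable {U : Matrix ι ι ℂ} (hU : U ∈ unitaryGroup ι ℂ)
include hU

lemma sum_norm_sq_star_mulVec (ξ : ι → ℂ) :
    ∑ j, ‖(star U *ᵥ ξ) j‖ ^ 2 = ∑ j, ‖ξ j‖ ^ 2 := by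
  have h := dotProduct_conj_diagonal_mulVec U 1 ξ ξ
  rw [Pi.one_def, diagonal_one, Matrix.mul_one, mem_unitaryGroup_iff.1 hU, one_mulVec] at h
  have := congrArg Complex.re h
  simpa [dotProduct, Complex.re_sum, Complex.sq_norm, Complex.normSq_apply] using this.symm

lemma le_re_dotProduct_conj_diagonal_mulVec {d : ι → ℂ} {c : ℝ} (hd : ∀ j, c ≤ (d j).re)
    (ξ : ι → ℂ) :
    c * ∑ j, ‖ξ j‖ ^ 2 ≤ (star ξ ⬝ᵥ (U * diagonal d * star U) *ᵥ ξ).re := by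
  rw [dotProduct_conj_diagonal_mulVec, ← sum_norm_sq_star_mulVec hU, Finset.mul_sum,
    Complex.re_sum]
  refine Finset.sum_le_sum fun j _ => ?_
  rw [mul_assoc, mul_comm (star _), Complex.star_def, Complex.mul_conj', ← Complex.ofReal_pow,
    Complex.re_mul_ofReal]
  exact mul_le_mul_of_nonneg_right (hd j) (sq_nonneg _)

lemma norm_dotProduct_conj_diagonal_mulVec_le {d : ι → ℂ} {C : ℝ} (hC : 0 ≤ C)
    (hd : ∀ j, ‖d j‖ ≤ C) (ξ ζ : ι → ℂ) :
    ‖star ξ ⬝ᵥ (U * diagonal d * star U) *ᵥ ζ‖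
      ≤ C * √(∑ j, ‖ξ j‖ ^ 2) * √(∑ j, ‖ζ j‖ ^ 2) := by
  rw [dotProduct_conj_diagonal_mulVec, ← sum_norm_sq_star_mulVec hU ξ,
    ← sum_norm_sq_star_mulVec hU ζ, mul_assoc]
  calc _ ≤ ∑ j, C * (‖(star U *ᵥ ξ) j‖ * ‖(star U *ᵥ ζ) j‖) := by
        refine (norm_sum_le _ _).trans (Finset.sum_le_sum fun j _ => ?_)
        rw [norm_mul, norm_mul, norm_star, mul_assoc]
        exact mul_le_mul_of_nonneg_right (hd j) (by positivity)
    _ ≤ _ := by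
        rw [← Finset.mul_sum]
        exact mul_le_mul_of_nonneg_left (Real.sum_mul_le_sqrt_mul_sqrt _ _ _) hC

lemma inv_conj_diagonal {d : ι → ℂ} (hd : ∀ j, d j ≠ 0) :
    (U * diagonal d * star U)⁻¹ = U * diagonal d⁻¹ * star U := by
  refine inv_eq_right_inv ?_
  have hdd : diagonal d * diagonal d⁻¹ = 1 := by
    rw [diagonal_mul_diagonal, ← diagonal_one]
    exact congrArg diagonal (funext fun j => mul_inv_cancel₀ (hd j))
  calc U * diagonal d * star U * (U * diagonal d⁻¹ * star U)
      = U * (diagonal d * (star U * U) * diagonal d⁻¹) * star U := by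
        simp only [Matrix.mul_assoc]
    _ = 1 := by
        rw [mem_unitaryGroup_iff'.1 hU, Matrix.mul_one, hdd, Matrix.mul_one,
          mem_unitaryGroup_iff.1 hU]

end UnitaryConjugation

lemma star_map_ofReal {ι : Type*} (H : Matrix ι ι ℝ) :
    star (H.map ((↑) : ℝ → ℂ)) = Hᵀ.map ((↑) : ℝ → ℂ) := by
  rw [star_eq_conjTranspose, ← conjTranspose_map _ (fun x => (Complex.conj_ofReal x).symm),
    conjTranspose_eq_transpose_of_trivial]

lemma map_ofReal_mem_unitaryGroup {ι : Type*} [Fintype ι] [DecidableEq ι] {H : Matrix ι ι ℝ}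
    (hH : H * Hᵀ = 1) : H.map ((↑) : ℝ → ℂ) ∈ unitaryGroup ι ℂ := by
  rw [mem_unitaryGroup_iff, star_map_ofReal, show Complex.ofReal = ⇑Complex.ofRealHom from rfl,
    ← Matrix.map_mul, hH, Matrix.map_one _ (map_zero _) (map_one _)]

namespace Complex

lemma normSq_one_add_I_mul_ofReal (a : ℝ) : normSq (1 + I * a) = 1 + a ^ 2 := by
  simp [normSq_apply]; ring

lemma re_inv_one_add_I_mul_ofReal (a : ℝ) : ((1 + I * a)⁻¹).re = (1 + a ^ 2)⁻¹ := by
  simp [inv_re, normSq_one_add_I_mul_ofReal, div_eq_mul_inv]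

lemma norm_one_add_I_mul_ofReal_le (a : ℝ) : ‖1 + I * a‖ ≤ 1 + a ^ 2 := by
  have h : ‖1 + I * a‖ ^ 2 = 1 + a ^ 2 := by rw [Complex.sq_norm, normSq_one_add_I_mul_ofReal]
  nlinarith [norm_nonneg (1 + I * a), sq_nonneg a]

lemma re_one_add_I_mul_sq_mul_inv (a b : ℝ) :
    ((1 + I * b) ^ 2 * (1 + I * a)⁻¹).re = (1 - b ^ 2 + 2 * a * b) / (1 + a ^ 2) := by
  rw [mul_re, inv_re, inv_im, normSq_one_add_I_mul_ofReal]
  simp [pow_two]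
  field_simp
  ring

lemma re_one_add_I_mul_mul_inv_sq (a b : ℝ) :
    ((1 + I * a) * ((1 + I * b) ^ 2)⁻¹).re = (1 - b ^ 2 + 2 * a * b) / (1 + b ^ 2) ^ 2 := by
  rw [mul_re, inv_re, inv_im, map_pow, normSq_one_add_I_mul_ofReal]
  simp [pow_two]
  field_simp
  ring

end Complex

/-- The diagonal of `D` in terms of `a = f_θ'(r)` and `b = f_θ(r)/r`. -/
noncomputable def pmlDiag (a b : ℝ) : Fin 3 → ℂ :=
  ![(1 + Complex.I * b) ^ 2 * (1 + Complex.I * a)⁻¹, 1 + Complex.I * a, 1 + Complex.I * a]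

lemma pmlD_eq_diagonal_pmlDiag (f : ℝ → ℝ) (θ r : ℝ) :
    pmlD f θ r = diagonal (pmlDiag (tan θ * deriv f r) (tan θ * (f r / r))) := by
  simp only [pmlD, pmlDiag, pmlAlpha, pmlBeta]
  push_cast
  ring_nf

lemma pmlDiag_bounds {a b K : ℝ} (hb : 0 ≤ b) (hba : b ≤ a) (hK : 1 + a ^ 2 ≤ K) (j : Fin 3) :
    K⁻¹ ≤ (pmlDiag a b j).re ∧ K⁻¹ ≤ ((pmlDiag a b j)⁻¹).re ∧ ‖pmlDiag a b j‖ ≤ K := by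
  have ha : 0 ≤ a := hb.trans hba
  have hK' : K⁻¹ ≤ (1 + a ^ 2)⁻¹ := inv_anti₀ (by positivity) hK
  have hnum : 1 + b ^ 2 ≤ 1 - b ^ 2 + 2 * a * b := by nlinarith
  fin_cases j <;> dsimp [pmlDiag]
  · refine ⟨hK'.trans ?_, hK'.trans ?_, ?_⟩
    · rw [Complex.re_one_add_I_mul_sq_mul_inv, inv_eq_one_div]
      gcongr
      linarith [sq_nonneg b]
    · rw [_root_.mul_inv_rev, inv_inv, Complex.re_one_add_I_mul_mul_inv_sq, inv_eq_one_div,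
        div_le_div_iff₀ (by positivity) (by positivity)]
      nlinarith [sq_nonneg b, sq_nonneg a, mul_nonneg hb ha]
    · have hα : 1 ≤ ‖1 + Complex.I * a‖ := by
        simpa using Complex.abs_re_le_norm (1 + Complex.I * a)
      rw [norm_mul, norm_pow, norm_inv, Complex.sq_norm, Complex.normSq_one_add_I_mul_ofReal]
      calc (1 + b ^ 2) * ‖1 + Complex.I * a‖⁻¹ ≤ 1 + b ^ 2 :=
            mul_le_of_le_one_right (by positivity) (inv_le_one_of_one_le₀ hα)
        _ ≤ K := by nlinarith
  all_goals
    refine ⟨hK'.trans ?_, by rwa [Complex.re_inv_one_add_I_mul_ofReal],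
      (Complex.norm_one_add_I_mul_ofReal_le a).trans hK⟩
    simpa using inv_le_one_of_one_le₀ (by nlinarith : (1 : ℝ) ≤ 1 + a ^ 2)

section RadialProfile

variable {f : ℝ → ℝ}

lemma div_le_deriv_of_monotoneOn_div {r : ℝ} (hr : 0 < r) (hf : DifferentiableAt ℝ f r)
    (hmono : MonotoneOn (fun s => f s / s) (Set.Ioi 0)) : f r / r ≤ deriv f r := by
  have hd : HasDerivAt (fun s => f s / s) ((deriv f r * r - f r * 1) / r ^ 2) r :=
    hf.hasDerivAt.div (hasDerivAt_id r) hr.ne'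
  have h := hmono.derivWithin_nonneg (x := r)
  rw [derivWithin_of_isOpen isOpen_Ioi hr, hd.deriv] at h
  rw [le_div_iff₀ (pow_pos hr 2), zero_mul] at h
  rw [div_le_iff₀ hr]
  linarith

lemma div_nonneg_of_monotoneOn_div {R r : ℝ} (hR : 0 < R) (hf : ∀ s ∈ Set.Ioc 0 R, f s = 0)
    (hmono : MonotoneOn (fun s => f s / s) (Set.Ioi 0)) (hr : 0 < r) : 0 ≤ f r / r := by
  have hmin : 0 < min r R := lt_min hr hR
  have h : f (min r R) / min r R ≤ f r / r := hmono hmin hr (min_le_left r R)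
  rwa [hf _ ⟨hmin, min_le_right r R⟩, zero_div] at h

lemma exists_forall_deriv_le {R : ℝ} (hf : ContDiffOn ℝ 1 f (Set.Ici 0))
    (hlin : ∀ r, R ≤ r → f r = r) : ∃ A, ∀ r, 0 < r → deriv f r ≤ A := by
  obtain ⟨A, hA⟩ := isCompact_Icc.exists_bound_of_continuousOn
    ((hf.continuousOn_derivWithin (uniqueDiffOn_Ici 0) le_rfl).mono
      (Set.Icc_subset_Ici_self : Set.Icc 0 R ⊆ Set.Ici 0))
  refine ⟨max A 1, fun r hr => ?_⟩
  rcases le_or_gt r R with hrR | hRr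
  · rw [← derivWithin_of_mem_nhds (Ici_mem_nhds hr)]
    exact (le_abs_self _).trans ((hA r ⟨hr.le, hrR⟩).trans (le_max_left A 1))
  · have hid : f =ᶠ[nhds r] id :=
      Filter.eventually_of_mem (Ioi_mem_nhds hRr) fun s hs => hlin s (le_of_lt hs)
    rw [hid.deriv_eq, deriv_id]
    exact le_max_right A 1

end RadialProfile

lemma sphericalH_mul_transpose (φ ϕ : ℝ) : sphericalH φ ϕ * (sphericalH φ ϕ)ᵀ = 1 := by
  have h1 := sin_sq_add_cos_sq φ
  have h2 := sin_sq_add_cos_sq ϕ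
  ext i j
  fin_cases i <;> fin_cases j <;>
    simp [sphericalH, Matrix.mul_apply, Fin.sum_univ_three] <;>
    first
      | nlinarith
      | linear_combination (sin ϕ * cos ϕ) * h1

theorem stmt19_general
    (Rminus Rplus : ℝ) (hR : 0 < Rminus)
    (f : ℝ → ℝ) (hC1 : ContDiffOn ℝ 1 f (Set.Ici 0))
    (hzero : ∀ r : ℝ, 0 ≤ r → (f r = 0 ↔ r ≤ Rminus))
    (hlin : ∀ r : ℝ, Rplus ≤ r → f r = r)
    (hnd : ∀ r s : ℝ, 0 < r → r ≤ s → f r / r ≤ f s / s) :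
    ∀ ε > 0, ∃ c > 0, ∃ C > 0, ∀ θ : ℝ, ε ≤ θ → θ ≤ π / 2 - ε →
      ∀ r : ℝ, 0 < r → ∀ φ ϕ : ℝ, ∀ ξ ζ : Fin 3 → ℂ,
        c * ∑ i, ‖ξ i‖ ^ 2 ≤ (star ξ ⬝ᵥ (pmlM f θ r φ ϕ).mulVec ξ).re ∧
        c * ∑ i, ‖ξ i‖ ^ 2 ≤ (star ξ ⬝ᵥ ((pmlM f θ r φ ϕ)⁻¹).mulVec ξ).re ∧
        ‖star ξ ⬝ᵥ (pmlM f θ r φ ϕ).mulVec ζ‖ ≤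
          C * Real.sqrt (∑ i, ‖ξ i‖ ^ 2) * Real.sqrt (∑ i, ‖ζ i‖ ^ 2) := by
  have hmono : MonotoneOn (fun s => f s / s) (Set.Ioi 0) := fun r hr s _ hrs => hnd r s hr hrs
  obtain ⟨A, hA⟩ := exists_forall_deriv_le hC1 hlin
  intro ε hε
  set K := 1 + (tan (π / 2 - ε) * A) ^ 2
  refine ⟨K⁻¹, by positivity, K, by positivity, fun θ hθ₁ hθ₂ r hr φ ϕ ξ ζ => ?_⟩
  have htan₀ : 0 ≤ tan θ := tan_nonneg_of_nonneg_of_le_pi_div_two (by linarith) (by linarith)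
  have htan : tan θ ≤ tan (π / 2 - ε) :=
    strictMonoOn_tan.monotoneOn ⟨by linarith, by linarith⟩ ⟨by linarith, by linarith⟩ hθ₂
  have hb : 0 ≤ f r / r :=
    div_nonneg_of_monotoneOn_div hR (fun s hs => (hzero s hs.1.le).2 hs.2) hmono hr
  have hba : f r / r ≤ deriv f r := div_le_deriv_of_monotoneOn_div hr
    ((hC1.differentiableOn one_ne_zero).differentiableAt (Ici_mem_nhds hr)) hmono
  have ha₀ : 0 ≤ tan θ * deriv f r := mul_nonneg htan₀ (hb.trans hba)
  have hK : 1 + (tan θ * deriv f r) ^ 2 ≤ K := by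
    refine add_le_add_right (pow_le_pow_left₀ ha₀ ?_ 2) 1
    exact mul_le_mul htan (hA r hr) (hb.trans hba) (htan₀.trans htan)
  have hd := pmlDiag_bounds (mul_nonneg htan₀ hb) (mul_le_mul_of_nonneg_left hba htan₀) hK
  set d := pmlDiag (tan θ * deriv f r) (tan θ * (f r / r))
  have hd₀ : ∀ j, d j ≠ 0 := fun j h => by
    have := (hd j).2.1
    rw [h, _root_.inv_zero, Complex.zero_re] at this
    exact this.not_gt (by positivity)
  have hU := map_ofReal_mem_unitaryGroup (sphericalH_mul_transpose φ ϕ)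
  have hM : pmlM f θ r φ ϕ =
      (sphericalH φ ϕ).map (↑) * diagonal d * star ((sphericalH φ ϕ).map (↑)) := by
    rw [pmlM, pmlD_eq_diagonal_pmlDiag, star_map_ofReal]
  rw [hM, inv_conj_diagonal hU hd₀]
  exact ⟨le_re_dotProduct_conj_diagonal_mulVec hU (fun j => (hd j).1) ξ,
    le_re_dotProduct_conj_diagonal_mulVec hU (fun j => (hd j).2.1) ξ,
    norm_dotProduct_conj_diagonal_mulVec_le hU (by positivity) (fun j => (hd j).2.2) ξ ζ⟩

theorem stmt19
    (Rminus Rplus : ℝ) (hR : 0 < Rminus) (hRR : Rminus < Rplus)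
    (f : ℝ → ℝ) (hC1 : ContDiffOn ℝ 1 f (Set.Ici 0))
    (hzero : ∀ r : ℝ, 0 ≤ r → (f r = 0 ↔ r ≤ Rminus))
    (hdzero : ∀ r : ℝ, 0 ≤ r → (deriv f r = 0 ↔ r ≤ Rminus))
    (hmono : ∀ r : ℝ, 0 ≤ r → 0 ≤ deriv f r)
    (hlin : ∀ r : ℝ, Rplus ≤ r → f r = r)
    (hnd : ∀ r s : ℝ, 0 < r → r ≤ s → f r / r ≤ f s / s) :
    ∀ ε > 0, ∃ c > 0, ∃ C > 0, ∀ θ : ℝ, ε ≤ θ → θ ≤ π / 2 - ε →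
      ∀ r : ℝ, 0 < r → ∀ φ ϕ : ℝ, ∀ ξ ζ : Fin 3 → ℂ,
        c * ∑ i, ‖ξ i‖ ^ 2 ≤ (star ξ ⬝ᵥ (pmlM f θ r φ ϕ).mulVec ξ).re ∧
        c * ∑ i, ‖ξ i‖ ^ 2 ≤ (star ξ ⬝ᵥ ((pmlM f θ r φ ϕ)⁻¹).mulVec ξ).re ∧
        ‖star ξ ⬝ᵥ (pmlM f θ r φ ϕ).mulVec ζ‖ ≤
          C * Real.sqrt (∑ i, ‖ξ i‖ ^ 2) * Real.sqrt (∑ i, ‖ζ i‖ ^ 2) :=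
  stmt19_general Rminus Rplus hR f hC1 hzero hlin hnd
end
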